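/- arXiv:2501.02547 — 4 statements merged into one kernel-verified Lean document; each statement's English description precedes it below -/
import Mathlib

section
/- Let n ≥ 1, let z ∈ ℝⁿ, let I ⊆ {1,…,n} be nonempty, and suppose there are a ∈ ℝ and c ≥ 0 such that z_i = a for all i ∈ I and z_j ≤ a − c for all j ∉ I. Let u ∈ ℝⁿ be the uniform distribution on I, i.e. u_k = 1/|I| if k ∈ I and u_k = 0 otherwise. Then max_{1 ≤ k ≤ n} |softmax(z)_k − u_k| ≤ n·e^{−c}. -/
/-!
A probability vector that is constant on `I` differs entrywise from the uniform distribution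
on `I` by at most its total mass outside `I`. For softmax, the denominator contains `e^a`, so
each entry off `I` is at most `e^{z_j - a} ≤ e^{-c}`, and that mass is at most `n e^{-c}`.
-/

open BigOperators

noncomputable section

/-- The softmax function on `ℝⁿ`: `softmax(z)_k = e^{z_k} / Σ_l e^{z_l}`. -/
def softmax {n : ℕ} (z : Fin n → ℝ) (k : Fin n) : ℝ :=
  Real.exp (z k) / ∑ l, Real.exp (z l)

open Finset Real

theorem abs_sub_uniform_le_sum_compl {ι : Type*} [Fintype ι] [DecidableEq ι] {p : ι → ℝ}
    (hp0 : ∀ i, 0 ≤ p i) (hp1 : ∑ i, p i = 1) {I : Finset ι} {q : ℝ}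
    (hq : ∀ i ∈ I, p i = q) (k : ι) :
    |p k - (if k ∈ I then 1 / (#I : ℝ) else 0)| ≤ ∑ j ∈ Iᶜ, p j := by
  have htail : 0 ≤ ∑ j ∈ Iᶜ, p j := sum_nonneg fun j _ => hp0 j
  by_cases hk : k ∈ I
  · have hcard : (1 : ℝ) ≤ #I := by exact_mod_cast one_le_card.2 ⟨k, hk⟩
    have hsplit : #I * q + ∑ j ∈ Iᶜ, p j = 1 := by
      rw [← hp1, ← sum_add_sum_compl I, sum_congr rfl hq, sum_const, nsmul_eq_mul]
    have hdiff : p k - 1 / #I = -((∑ j ∈ Iᶜ, p j) / #I) := by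
      rw [hq k hk, ← hsplit]
      field_simp
      ring
    rw [if_pos hk, hdiff, abs_neg, abs_of_nonneg (by positivity)]
    exact div_le_self htail hcard
  · rw [if_neg hk, sub_zero, abs_of_nonneg (hp0 k)]
    exact single_le_sum (fun j _ => hp0 j) (mem_compl.2 hk)

theorem softmax_nonneg {n : ℕ} (z : Fin n → ℝ) (k : Fin n) : 0 ≤ softmax z k := by
  unfold softmax
  positivity

theorem sum_softmax {n : ℕ} (hn : 0 < n) (z : Fin n → ℝ) : ∑ k, softmax z k = 1 := by
  have : (0 : ℝ) < ∑ l, exp (z l) :=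
    sum_pos (fun l _ => exp_pos (z l)) (univ_nonempty_iff.2 ⟨⟨0, hn⟩⟩)
  simp only [softmax, ← sum_div, div_self this.ne']

theorem softmax_le_exp_sub {n : ℕ} (z : Fin n → ℝ) (i k : Fin n) :
    softmax z k ≤ exp (z k - z i) := by
  rw [softmax, exp_sub]
  exact div_le_div_of_nonneg_left (exp_pos _).le (exp_pos _)
    (single_le_sum (fun l _ => (exp_pos (z l)).le) (mem_univ i))

theorem softmax_close_to_uniform_general
    (n : ℕ) (hn : 1 ≤ n) (z : Fin n → ℝ) (I : Finset (Fin n)) (hI : I.Nonempty)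
    (a c : ℝ)
    (hza : ∀ i ∈ I, z i = a) (hzc : ∀ j ∉ I, z j ≤ a - c) :
    ∀ k : Fin n,
      |softmax z k - (if k ∈ I then 1 / (I.card : ℝ) else 0)| ≤ n * Real.exp (-c) := by
  intro k
  obtain ⟨i, hi⟩ := hI
  calc |softmax z k - (if k ∈ I then 1 / (I.card : ℝ) else 0)|
      ≤ ∑ j ∈ Iᶜ, softmax z j :=
        abs_sub_uniform_le_sum_compl (softmax_nonneg z) (sum_softmax hn z)
          (fun j hj => by rw [softmax, hza j hj]) k
    _ ≤ ∑ _j ∈ Iᶜ, exp (-c) := sum_le_sum fun j hj =>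
        (softmax_le_exp_sub z i j).trans <|
          exp_le_exp.2 (by linarith [hza i hi, hzc j (mem_compl.1 hj)])
    _ = #Iᶜ * exp (-c) := by rw [sum_const, nsmul_eq_mul]
    _ ≤ n * exp (-c) := by
        gcongr
        exact_mod_cast (card_le_univ Iᶜ).trans_eq (Fintype.card_fin n)

/-- If `z` equals `a` on a nonempty set `I` and is at most `a − c`
(with `c ≥ 0`) off `I`, then softmax of `z` is entrywise within `n·e^{−c}` of the
uniform distribution on `I`. -/
theorem softmax_close_to_uniform
    (n : ℕ) (hn : 1 ≤ n) (z : Fin n → ℝ) (I : Finset (Fin n)) (hI : I.Nonempty)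
    (a c : ℝ) (hc : 0 ≤ c)
    (hza : ∀ i ∈ I, z i = a) (hzc : ∀ j ∉ I, z j ≤ a - c) :
    ∀ k : Fin n,
      |softmax z k - (if k ∈ I then 1 / (I.card : ℝ) else 0)| ≤ n * Real.exp (-c) :=
  softmax_close_to_uniform_general n hn z I hI a c hza hzc

end
end

section
/- Let 𝒫 be a Bayesian-network structure on M variables, and define the block matrix A ∈ ℝ^{Md×(M+1)d} with d×d blocks A_{ij} (i ∈ [M], j ∈ [M+1]) given by A_{ij} = I_d if j ≤ M and i ∈ {j} ∪ 𝒫(j), and A_{ij} = 0 otherwise. Let W₁ ∈ ℝ^{(2M+1)d×(2M+1)d} be the matrix whose first Md rows are [I_{Md}, −2A] and whose remaining (M+1)d rows are zero, and let W₂ = −I_{(2M+1)d}. Then for every query index m₀ ∈ [M] and every admissible input matrix X built from one-hot context vectors, the feed-forward layer satisfies X + W₂·ReLU(W₁X) = X̃, where X̃ is the masked matrix obtained from X by replacing x_{mi} (for all i ∈ [N]) and x_{mq} by 0 for every m ∉ {m₀} ∪ 𝒫(m₀) and keeping all other entries unchanged. -/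
open Matrix BigOperators

noncomputable section

/-- Row index type for `ℝ^{(2M+1)d}`: `M` value blocks plus `M+1` positional blocks,
each of size `d`. -/
abbrev Row (M d : ℕ) := (Fin M ⊕ Fin (M + 1)) × Fin d

/-- Column index type: `N` context columns plus one query column. -/
abbrev Col (N : ℕ) := Fin N ⊕ Unit

/-- A vector in `ℝ^d` is one-hot if exactly one entry is `1` and all others are `0`. -/
def IsOneHot {d : ℕ} (v : Fin d → ℝ) : Prop :=
  ∃ j : Fin d, v = fun k => if k = j then (1 : ℝ) else 0

/-- The admissible input matrix `X ∈ ℝ^{(2M+1)d × (N+1)}`. -/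
def inputMatrix {M N d : ℕ} (x : Fin M → Fin N → Fin d → ℝ)
    (xq : Fin M → Fin d → ℝ) (m₀ : Fin M) : Matrix (Row M d) (Col N) ℝ :=
  fun r c =>
    match r, c with
    | (Sum.inl m, k), Sum.inl i => x m i k
    | (Sum.inl m, k), Sum.inr _ => xq m k
    | (Sum.inr j, _), Sum.inl _ => if (j : ℕ) = (m₀ : ℕ) then 1 else 0
    | (Sum.inr j, _), Sum.inr _ => if (j : ℕ) = (m₀ : ℕ) ∨ (j : ℕ) = M then 1 else 0

/-- The masked matrix `X̃`: entries of `X` in value block `m` are replaced by `0`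
unless `m ∈ {m₀} ∪ 𝒫(m₀)`. -/
def maskedMatrix {M N d : ℕ} (P : Fin M → Finset (Fin M))
    (x : Fin M → Fin N → Fin d → ℝ) (xq : Fin M → Fin d → ℝ) (m₀ : Fin M) :
    Matrix (Row M d) (Col N) ℝ :=
  fun r c =>
    match r with
    | (Sum.inl m, _) => if m = m₀ ∨ m ∈ P m₀ then inputMatrix x xq m₀ r c else 0
    | (Sum.inr _, _) => inputMatrix x xq m₀ r c

/-- The matrix `W₁ ∈ ℝ^{(2M+1)d×(2M+1)d}` whose first `Md` rows are `[I_{Md}, −2A]`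
(where `A` is the block matrix with `A_{ij} = I_d` iff `j ≤ M` and `i ∈ {j} ∪ 𝒫(j)`)
and whose remaining `(M+1)d` rows are zero. -/
def W1sel {M d : ℕ} (P : Fin M → Finset (Fin M)) : Matrix (Row M d) (Row M d) ℝ :=
  fun r c =>
    match r, c with
    | (Sum.inl i, k), (Sum.inl j, k') => if i = j ∧ k = k' then 1 else 0
    | (Sum.inl i, k), (Sum.inr j, k') =>
        if h : (j : ℕ) < M then
          (if (i = ⟨(j : ℕ), h⟩ ∨ i ∈ P ⟨(j : ℕ), h⟩) ∧ k = k' then -2 else 0)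
        else 0
    | (Sum.inr _, _), _ => 0

/-
Row `(i, k)` of `W₁ X` is the value entry minus `2` exactly when the value block `i` is
`m₀` or one of its parents: `W₁` reads only the first `M` positional blocks, and there
both `p` and `p_q` are the indicator of block `m₀`. The positional rows of `W₁ X` vanish.
Value entries lie in `[0, 1]`, so `ReLU` kills the shifted entries and keeps the others,
and `X − ReLU(W₁ X)` is `X` on the kept blocks and `0` elsewhere.
-/
lemma IsOneHot.mem_Icc {d : ℕ} {v : Fin d → ℝ} (hv : IsOneHot v) (k : Fin d) :
    v k ∈ Set.Icc (0 : ℝ) 1 := by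
  obtain ⟨j, rfl⟩ := hv
  dsimp only
  split_ifs <;> norm_num

lemma W1sel_mul_inr {M d : ℕ} {γ : Type*} (P : Fin M → Finset (Fin M))
    (X : Matrix (Row M d) γ ℝ) (j : Fin (M + 1)) (k : Fin d) (c : γ) :
    (W1sel P * X : Matrix (Row M d) γ ℝ) (Sum.inr j, k) c = 0 := by
  -- These products elaborate through the `HMul` instance of the synonym `CStarMatrix`,
  -- so `Matrix` lemmas about them need `erw`.
  erw [Matrix.mul_apply]
  simp [W1sel]

lemma W1sel_mul_inl {M d : ℕ} {γ : Type*} (P : Fin M → Finset (Fin M))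
    (X : Matrix (Row M d) γ ℝ) (i : Fin M) (k : Fin d) (c : γ) :
    (W1sel P * X : Matrix (Row M d) γ ℝ) (Sum.inl i, k) c =
      X (Sum.inl i, k) c -
        2 * ∑ j : Fin M, if i = j ∨ i ∈ P j then X (Sum.inr j.castSucc, k) c else 0 := by
  erw [Matrix.mul_apply]
  simp [Fintype.sum_prod_type, Fin.sum_univ_castSucc, W1sel, ite_and, sub_eq_add_neg,
    Finset.mul_sum, ← Finset.sum_neg_distrib, apply_ite]

lemma inputMatrix_inr_castSucc {M N d : ℕ} (x : Fin M → Fin N → Fin d → ℝ)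
    (xq : Fin M → Fin d → ℝ) (m₀ j : Fin M) (k : Fin d) (c : Col N) :
    inputMatrix x xq m₀ (Sum.inr j.castSucc, k) c = if j = m₀ then 1 else 0 := by
  rcases c with i | _ <;> simp [inputMatrix, Fin.val_eq_val, j.isLt.ne]

lemma W1sel_mul_inputMatrix_inl {M N d : ℕ} (P : Fin M → Finset (Fin M))
    (x : Fin M → Fin N → Fin d → ℝ) (xq : Fin M → Fin d → ℝ) (m₀ i : Fin M) (k : Fin d)
    (c : Col N) :
    (W1sel P * inputMatrix x xq m₀ : Matrix (Row M d) (Col N) ℝ) (Sum.inl i, k) c =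
      inputMatrix x xq m₀ (Sum.inl i, k) c - 2 * if i = m₀ ∨ i ∈ P m₀ then 1 else 0 := by
  rw [W1sel_mul_inl, Fintype.sum_eq_single m₀ fun j hj => by simp [inputMatrix_inr_castSucc, hj]]
  simp [inputMatrix_inr_castSucc]

lemma sub_max_sub_ite_zero {v : ℝ} (hv : v ∈ Set.Icc (0 : ℝ) 1) (p : Prop) [Decidable p] :
    v - max (v - 2 * if p then 1 else 0) 0 = if p then v else 0 := by
  obtain ⟨h0, h1⟩ := hv
  split_ifs
  · rw [max_eq_right (by linarith)]; ring
  · rw [mul_zero, sub_zero, max_eq_left h0, sub_self]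

theorem feedforward_masks_nonparents_general
    (M N d : ℕ)
    (P : Fin M → Finset (Fin M))
    (m₀ : Fin M) (x : Fin M → Fin N → Fin d → ℝ) (xq : Fin M → Fin d → ℝ)
    (hx : ∀ m i, IsOneHot (x m i))
    (hxq1 : ∀ m, m < m₀ → IsOneHot (xq m))
    (hxq2 : ∀ m, m₀ ≤ m → xq m = 0) :
    inputMatrix x xq m₀ +
        ((-(1 : Matrix (Row M d) (Row M d) ℝ)) *
          (Matrix.map (W1sel P * inputMatrix x xq m₀) fun z => max z 0) : Matrix (Row M d) (Col N) ℝ) =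
      maskedMatrix P x xq m₀ := by
  have hxq : ∀ m k, xq m k ∈ Set.Icc (0 : ℝ) 1 := by
    intro m k
    rcases lt_or_ge m m₀ with hm | hm
    · exact (hxq1 m hm).mem_Icc k
    · simp [hxq2 m hm]
  have hX : ∀ m k c, inputMatrix x xq m₀ (Sum.inl m, k) c ∈ Set.Icc (0 : ℝ) 1 := by
    rintro m k (i | _)
    exacts [(hx m i).mem_Icc k, hxq m k]
  erw [Matrix.neg_mul, Matrix.one_mul]
  ext ⟨i | j, k⟩ c
  · rw [Matrix.add_apply, Matrix.neg_apply, Matrix.map_apply, W1sel_mul_inputMatrix_inl,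
      ← sub_eq_add_neg, sub_max_sub_ite_zero (hX i k c)]
    rfl
  · simp [W1sel_mul_inr, maskedMatrix]

/-- With `W₁` as above and `W₂ = −I_{(2M+1)d}`, the feed-forward layer
`X + W₂·ReLU(W₁X)` maps every admissible input matrix to the masked matrix `X̃`. -/
theorem feedforward_masks_nonparents
    (M N d : ℕ) (hM : 1 ≤ M) (hN : 1 ≤ N) (hd : 1 ≤ d)
    (P : Fin M → Finset (Fin M))
    (hP : ∀ m : Fin M, ∀ m' ∈ P m, m' < m)
    (m₀ : Fin M) (x : Fin M → Fin N → Fin d → ℝ) (xq : Fin M → Fin d → ℝ)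
    (hx : ∀ m i, IsOneHot (x m i))
    (hxq1 : ∀ m, m < m₀ → IsOneHot (xq m))
    (hxq2 : ∀ m, m₀ ≤ m → xq m = 0) :
    inputMatrix x xq m₀ +
        ((-(1 : Matrix (Row M d) (Row M d) ℝ)) *
          (Matrix.map (W1sel P * inputMatrix x xq m₀) fun z => max z 0) : Matrix (Row M d) (Col N) ℝ) =
      maskedMatrix P x xq m₀ :=
  feedforward_masks_nonparents_general M N d P m₀ x xq hx hxq1 hxq2

end
end

section
/- Let c > 0 and define K = √c·[I_{Md}, 0_{Md×Md}, 0_{Md×d}; 0_{d×Md}, 0_{d×Md}, I_d] and Q = √c·[I_{Md}, 0_{Md×Md}, 0_{Md×d}; 0_{d×Md}, 0_{d×Md}, −I_d], both in ℝ^{(M+1)d×(2M+1)d}. Let X̃ be the masked matrix of an admissible input for query index m₀, with columns x̃_i (i ∈ [N]) and last column x̃_q. Then for every i ∈ [N], (K x̃_i)ᵀ(Q x̃_q) = c·|{m ∈ 𝒫(m₀) : x_{mi} = x_{mq}}|, and (K x̃_q)ᵀ(Q x̃_q) = c·(|𝒫(m₀)| − d). -/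
/-! `K` and `Q` act as `√c` on the value blocks and as `±√c` on the last positional block, so a
score is `c` times the sum of the inner products of the value blocks minus that of the last
positional blocks. Masking keeps only the blocks of `m₀` and its parents; the query's block at
`m₀` vanishes, and one-hot vectors have inner product `1` exactly when they are equal. The last
positional block is `0` in a context column and `1_d` in the query column, whence the `- d`. -/

open Matrix BigOperators

noncomputable section

/-- Row index type for `ℝ^{(M+1)d}`: `M` blocks of size `d` plus one extra block. -/
abbrev KRow (M d : ℕ) := (Fin M ⊕ Unit) × Fin d

/-- The key matrix `K = √c·[I_{Md}, 0, 0; 0, 0, I_d] ∈ ℝ^{(M+1)d×(2M+1)d}`. -/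
def Kmat (M d : ℕ) (c : ℝ) : Matrix (KRow M d) (Row M d) ℝ :=
  fun r col =>
    match r, col with
    | (Sum.inl i, k), (Sum.inl j, k') => if i = j ∧ k = k' then Real.sqrt c else 0
    | (Sum.inl _, _), (Sum.inr _, _) => 0
    | (Sum.inr _, k), (Sum.inr j, k') => if (j : ℕ) = M ∧ k = k' then Real.sqrt c else 0
    | (Sum.inr _, _), (Sum.inl _, _) => 0

/-- The query matrix `Q = √c·[I_{Md}, 0, 0; 0, 0, −I_d] ∈ ℝ^{(M+1)d×(2M+1)d}`. -/
def Qmat (M d : ℕ) (c : ℝ) : Matrix (KRow M d) (Row M d) ℝ :=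
  fun r col =>
    match r, col with
    | (Sum.inl i, k), (Sum.inl j, k') => if i = j ∧ k = k' then Real.sqrt c else 0
    | (Sum.inl _, _), (Sum.inr _, _) => 0
    | (Sum.inr _, k), (Sum.inr j, k') => if (j : ℕ) = M ∧ k = k' then -Real.sqrt c else 0
    | (Sum.inr _, _), (Sum.inl _, _) => 0

open Classical in
theorem IsOneHot.dotProduct_eq {d : ℕ} {u v : Fin d → ℝ} (hu : IsOneHot u) (hv : IsOneHot v) :
    u ⬝ᵥ v = if u = v then 1 else 0 := by
  obtain ⟨j, rfl⟩ := hu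
  obtain ⟨j', rfl⟩ := hv
  by_cases h : j = j'
  · subst h
    simp [dotProduct]
  · have hne : (fun k => if k = j then (1 : ℝ) else 0) ≠ fun k => if k = j' then 1 else 0 :=
      fun he => by simpa [h] using congrFun he j
    simp [dotProduct, hne, Ne.symm h]

theorem IsOneHot.dotProduct_self {d : ℕ} {u : Fin d → ℝ} (hu : IsOneHot u) : u ⬝ᵥ u = 1 := by
  simp [hu.dotProduct_eq hu]

section KeyQuery

variable {M d : ℕ} (c : ℝ) (v : Row M d → ℝ)

theorem Kmat_mulVec_inl (a : Fin M) (k : Fin d) :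
    (Kmat M d c *ᵥ v) (.inl a, k) = √c * v (.inl a, k) := by
  simp [mulVec, dotProduct, Kmat, Fintype.sum_prod_type, ite_and]

theorem Qmat_mulVec_inl (a : Fin M) (k : Fin d) :
    (Qmat M d c *ᵥ v) (.inl a, k) = √c * v (.inl a, k) := by
  simp [mulVec, dotProduct, Qmat, Fintype.sum_prod_type, ite_and]

theorem Kmat_mulVec_inr (k : Fin d) :
    (Kmat M d c *ᵥ v) (.inr (), k) = √c * v (.inr (Fin.last M), k) := by
  have hlast (j : Fin (M + 1)) : (j : ℕ) = M ↔ j = Fin.last M := by simp [Fin.ext_iff]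
  simp [mulVec, dotProduct, Kmat, Fintype.sum_prod_type, ite_and, hlast]

theorem Qmat_mulVec_inr (k : Fin d) :
    (Qmat M d c *ᵥ v) (.inr (), k) = -(√c * v (.inr (Fin.last M), k)) := by
  have hlast (j : Fin (M + 1)) : (j : ℕ) = M ↔ j = Fin.last M := by simp [Fin.ext_iff]
  simp [mulVec, dotProduct, Qmat, Fintype.sum_prod_type, ite_and, hlast]

end KeyQuery

theorem Kmat_mulVec_dotProduct_Qmat_mulVec {M d : ℕ} {c : ℝ} (hc : 0 ≤ c) (v w : Row M d → ℝ) :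
    Kmat M d c *ᵥ v ⬝ᵥ Qmat M d c *ᵥ w =
      c * (∑ a, Function.curry v (.inl a) ⬝ᵥ Function.curry w (.inl a) -
        Function.curry v (.inr (Fin.last M)) ⬝ᵥ Function.curry w (.inr (Fin.last M))) := by
  have hK (a b : ℝ) : √c * a * (√c * b) = c * (a * b) := by
    rw [mul_mul_mul_comm, Real.mul_self_sqrt hc]
  have hQ (a b : ℝ) : √c * a * -(√c * b) = -(c * (a * b)) := by
    rw [mul_neg, hK]
  simp only [dotProduct, Fintype.sum_prod_type, Fintype.sum_sum_type, Finset.univ_unique,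
    PUnit.default_eq_unit, Finset.sum_singleton, Kmat_mulVec_inl, Qmat_mulVec_inl,
    Kmat_mulVec_inr, Qmat_mulVec_inr, Function.curry_apply, hK, hQ,
    Finset.sum_neg_distrib, ← Finset.mul_sum]
  ring

section Masked

variable {M N d : ℕ} (P : Fin M → Finset (Fin M)) (x : Fin M → Fin N → Fin d → ℝ)
  (xq : Fin M → Fin d → ℝ) (m₀ : Fin M)

theorem curry_inputMatrix_context_inl (i : Fin N) (m : Fin M) :
    Function.curry (fun r => inputMatrix x xq m₀ r (.inl i)) (.inl m) = x m i :=
  rfl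

theorem curry_inputMatrix_query_inl (m : Fin M) :
    Function.curry (fun r => inputMatrix x xq m₀ r (.inr ())) (.inl m) = xq m :=
  rfl

theorem curry_maskedMatrix_inl (col : Col N) (m : Fin M) :
    Function.curry (fun r => maskedMatrix P x xq m₀ r col) (.inl m) =
      if m = m₀ ∨ m ∈ P m₀ then Function.curry (fun r => inputMatrix x xq m₀ r col) (.inl m)
      else 0 := by
  split_ifs with h <;> ext k <;> simp [maskedMatrix, h]

theorem curry_maskedMatrix_context_last (i : Fin N) :
    Function.curry (fun r => maskedMatrix P x xq m₀ r (.inl i)) (.inr (Fin.last M)) = 0 := by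
  ext k
  simp [maskedMatrix, inputMatrix, m₀.isLt.ne']

theorem curry_maskedMatrix_query_last :
    Function.curry (fun r => maskedMatrix P x xq m₀ r (.inr ())) (.inr (Fin.last M)) = 1 := by
  ext k
  simp [maskedMatrix, inputMatrix]

theorem sum_curry_maskedMatrix_inl_dotProduct (hm₀ : m₀ ∉ P m₀) (hq : xq m₀ = 0)
    (col : Col N) :
    ∑ a, Function.curry (fun r => maskedMatrix P x xq m₀ r col) (.inl a) ⬝ᵥ
        Function.curry (fun r => maskedMatrix P x xq m₀ r (.inr ())) (.inl a) =
      ∑ m ∈ P m₀, Function.curry (fun r => inputMatrix x xq m₀ r col) (.inl m) ⬝ᵥ xq m := by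
  calc _ = ∑ a with a = m₀ ∨ a ∈ P m₀,
        Function.curry (fun r => inputMatrix x xq m₀ r col) (.inl a) ⬝ᵥ xq a := by
        rw [Finset.sum_filter]
        refine Finset.sum_congr rfl fun a _ => ?_
        simp only [curry_maskedMatrix_inl]
        split_ifs <;> simp [curry_inputMatrix_query_inl]
    _ = ∑ a ∈ insert m₀ (P m₀),
        Function.curry (fun r => inputMatrix x xq m₀ r col) (.inl a) ⬝ᵥ xq a := by
        congr 1
        ext
        simp
    _ = _ := by rw [Finset.sum_insert hm₀, hq, dotProduct_zero, zero_add]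

end Masked

open Classical in
theorem key_query_attention_scores_general
    (M N d : ℕ) (c : ℝ) (hc : 0 < c)
    (P : Fin M → Finset (Fin M))
    (hP : ∀ m : Fin M, ∀ m' ∈ P m, m' < m)
    (m₀ : Fin M) (x : Fin M → Fin N → Fin d → ℝ) (xq : Fin M → Fin d → ℝ)
    (hx : ∀ m i, IsOneHot (x m i))
    (hxq1 : ∀ m, m < m₀ → IsOneHot (xq m))
    (hxq2 : ∀ m, m₀ ≤ m → xq m = 0) :
    (∀ i : Fin N,
      (Kmat M d c).mulVec (fun r => maskedMatrix P x xq m₀ r (Sum.inl i)) ⬝ᵥ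
          (Qmat M d c).mulVec (fun r => maskedMatrix P x xq m₀ r (Sum.inr ())) =
        c * (((P m₀).filter fun m => x m i = xq m).card : ℝ)) ∧
    (Kmat M d c).mulVec (fun r => maskedMatrix P x xq m₀ r (Sum.inr ())) ⬝ᵥ
        (Qmat M d c).mulVec (fun r => maskedMatrix P x xq m₀ r (Sum.inr ())) =
      c * (((P m₀).card : ℝ) - d) := by
  have hm₀ : m₀ ∉ P m₀ := fun h => lt_irrefl m₀ (hP m₀ m₀ h)
  have hquery_onehot (m : Fin M) (hm : m ∈ P m₀) : IsOneHot (xq m) := hxq1 m (hP m₀ m hm)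
  simp only [Kmat_mulVec_dotProduct_Qmat_mulVec hc.le,
    sum_curry_maskedMatrix_inl_dotProduct P x xq m₀ hm₀ (hxq2 m₀ le_rfl),
    curry_maskedMatrix_context_last, curry_maskedMatrix_query_last, curry_inputMatrix_context_inl,
    curry_inputMatrix_query_inl, zero_dotProduct, one_dotProduct_one, Fintype.card_fin, sub_zero]
  refine ⟨fun i => ?_, ?_⟩
  · rw [Finset.natCast_card_filter]
    exact congrArg _ (Finset.sum_congr rfl fun m hm => (hx m i).dotProduct_eq (hquery_onehot m hm))
  · rw [Finset.sum_congr rfl fun m hm => (hquery_onehot m hm).dotProduct_self, Finset.sum_const,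
      nsmul_one]

open Classical in
/-- With `K`, `Q` as above and `X̃` the masked matrix of an admissible
input for query index `m₀`: for every context column `i`,
`(K x̃_i)ᵀ(Q x̃_q) = c·|{m ∈ 𝒫(m₀) : x_{mi} = x_{mq}}|`, and
`(K x̃_q)ᵀ(Q x̃_q) = c·(|𝒫(m₀)| − d)`. -/
theorem key_query_attention_scores
    (M N d : ℕ) (hM : 1 ≤ M) (hN : 1 ≤ N) (hd : 1 ≤ d) (c : ℝ) (hc : 0 < c)
    (P : Fin M → Finset (Fin M))
    (hP : ∀ m : Fin M, ∀ m' ∈ P m, m' < m)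
    (m₀ : Fin M) (x : Fin M → Fin N → Fin d → ℝ) (xq : Fin M → Fin d → ℝ)
    (hx : ∀ m i, IsOneHot (x m i))
    (hxq1 : ∀ m, m < m₀ → IsOneHot (xq m))
    (hxq2 : ∀ m, m₀ ≤ m → xq m = 0) :
    (∀ i : Fin N,
      (Kmat M d c).mulVec (fun r => maskedMatrix P x xq m₀ r (Sum.inl i)) ⬝ᵥ
          (Qmat M d c).mulVec (fun r => maskedMatrix P x xq m₀ r (Sum.inr ())) =
        c * (((P m₀).filter fun m => x m i = xq m).card : ℝ)) ∧
    (Kmat M d c).mulVec (fun r => maskedMatrix P x xq m₀ r (Sum.inr ())) ⬝ᵥ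
        (Qmat M d c).mulVec (fun r => maskedMatrix P x xq m₀ r (Sum.inr ())) =
      c * (((P m₀).card : ℝ) - d) :=
  key_query_attention_scores_general M N d c hc P hP m₀ x xq hx hxq1 hxq2

end
end

section
/- Let X̃ be the masked matrix of an admissible input for query index m₀, with columns x̃_i (i ∈ [N]) and last column x̃_q, and suppose I(m₀) = {i ∈ [N] : x_{mi} = x_{mq} for all m ∈ 𝒫(m₀)} is nonempty. Then x̃_q − (1/|I(m₀)|)·Σ_{i∈I(m₀)} x̃_i = [0_{(m₀−1)d}; −p^{MLE}_{m₀}; 0_{(2M−m₀)d}; 1_d] ∈ ℝ^{(2M+1)d}, where p^{MLE}_{m₀} = (1/|I(m₀)|)·Σ_{i∈I(m₀)} x_{m₀ i}. -/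
open Matrix BigOperators

noncomputable section

open Classical in
/-- `I(m₀)`: indices of context samples matching the query on all parents of `m₀`. -/
def Iset {M N d : ℕ} (P : Fin M → Finset (Fin M))
    (x : Fin M → Fin N → Fin d → ℝ) (xq : Fin M → Fin d → ℝ) (m₀ : Fin M) :
    Finset (Fin N) :=
  Finset.univ.filter fun i => ∀ m ∈ P m₀, x m i = xq m

/-- The vector `[0_{(m₀−1)d}; −p; 0_{(2M−m₀)d}; 1_d] ∈ ℝ^{(2M+1)d}` with
`p = (1/|I(m₀)|)·Σ_{i∈I(m₀)} x_{m₀ i}`. -/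
def xhatAvg {M N d : ℕ} (P : Fin M → Finset (Fin M))
    (x : Fin M → Fin N → Fin d → ℝ) (xq : Fin M → Fin d → ℝ) (m₀ : Fin M) :
    Row M d → ℝ :=
  fun r =>
    match r with
    | (Sum.inl m, k) =>
        if m = m₀ then -((∑ i ∈ Iset P x xq m₀, x m₀ i k) / ((Iset P x xq m₀).card : ℝ))
        else 0
    | (Sum.inr j, _) => if (j : ℕ) = M then 1 else 0

/-! On every row outside the `m₀`-block and the last positional block, each context column indexed
by `I(m₀)` agrees with the query column: on parent blocks by the definition of `I(m₀)`, on the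
remaining value blocks because they are masked, and on positional blocks because `p` and `p_q`
differ only in the last block. So averaging over `I(m₀)` cancels these rows, and what is left is
`−p^{MLE}_{m₀}` (the query's own `m₀`-block is zero) and the extra `1_d` of `p_q`. -/

open Finset in
theorem Finset.sum_div_card_eq_of_forall_eq {ι K : Type*} [Semifield K] [CharZero K]
    {s : Finset ι} (hs : s.Nonempty) {f : ι → K} {c : K} (h : ∀ i ∈ s, f i = c) :
    (∑ i ∈ s, f i) / #s = c := by
  rw [← expect_eq_sum_div_card, expect_congr rfl h, expect_const hs]

section MaskedEntries

variable {M N d : ℕ} {P : Fin M → Finset (Fin M)} {x : Fin M → Fin N → Fin d → ℝ}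
  {xq : Fin M → Fin d → ℝ} {m₀ : Fin M}

theorem maskedMatrix_value_context_eq_query {i : Fin N} (hi : i ∈ Iset P x xq m₀) {m : Fin M}
    (hm : m ≠ m₀) (k : Fin d) :
    maskedMatrix P x xq m₀ (Sum.inl m, k) (Sum.inl i) =
      maskedMatrix P x xq m₀ (Sum.inl m, k) (Sum.inr ()) := by
  by_cases hp : m ∈ P m₀
  · simp only [maskedMatrix, inputMatrix, hp, or_true, if_true]
    exact congrFun ((Finset.mem_filter.mp hi).2 m hp) k
  · simp [maskedMatrix, hm, hp]

theorem maskedMatrix_positional_context_eq_query {j : Fin (M + 1)} (hj : (j : ℕ) ≠ M)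
    (k : Fin d) (i : Fin N) :
    maskedMatrix P x xq m₀ (Sum.inr j, k) (Sum.inl i) =
      maskedMatrix P x xq m₀ (Sum.inr j, k) (Sum.inr ()) := by
  simp [maskedMatrix, inputMatrix, hj]

theorem maskedMatrix_last_context (k : Fin d) (i : Fin N) :
    maskedMatrix P x xq m₀ (Sum.inr (Fin.last M), k) (Sum.inl i) = 0 := by
  simp [maskedMatrix, inputMatrix, m₀.isLt.ne']

theorem maskedMatrix_last_query (k : Fin d) :
    maskedMatrix P x xq m₀ (Sum.inr (Fin.last M), k) (Sum.inr ()) = 1 := by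
  simp [maskedMatrix, inputMatrix]

theorem maskedMatrix_queryBlock_context (k : Fin d) (i : Fin N) :
    maskedMatrix P x xq m₀ (Sum.inl m₀, k) (Sum.inl i) = x m₀ i k := by
  simp [maskedMatrix, inputMatrix]

theorem maskedMatrix_queryBlock_query (hq : xq m₀ = 0) (k : Fin d) :
    maskedMatrix P x xq m₀ (Sum.inl m₀, k) (Sum.inr ()) = 0 := by
  simp [maskedMatrix, inputMatrix, hq]

end MaskedEntries

theorem masked_query_minus_average_general
    (M N d : ℕ)
    (P : Fin M → Finset (Fin M))
    (m₀ : Fin M) (x : Fin M → Fin N → Fin d → ℝ) (xq : Fin M → Fin d → ℝ)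
    (hxq2 : ∀ m, m₀ ≤ m → xq m = 0)
    (hne : (Iset P x xq m₀).Nonempty) :
    (fun r => maskedMatrix P x xq m₀ r (Sum.inr ()) -
        (∑ i ∈ Iset P x xq m₀, maskedMatrix P x xq m₀ r (Sum.inl i)) /
          ((Iset P x xq m₀).card : ℝ)) =
      xhatAvg P x xq m₀ := by
  funext r
  rcases r with ⟨m | j, k⟩
  · by_cases hm : m = m₀
    · subst hm
      simp only [maskedMatrix_queryBlock_query (hxq2 m le_rfl), maskedMatrix_queryBlock_context,
        xhatAvg, if_true, zero_sub]
    · rw [Finset.sum_div_card_eq_of_forall_eq hne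
        fun i hi => maskedMatrix_value_context_eq_query hi hm k, sub_self]
      simp [xhatAvg, hm]
  · by_cases hj : (j : ℕ) = M
    · obtain rfl : j = Fin.last M := Fin.ext hj
      rw [maskedMatrix_last_query, Finset.sum_div_card_eq_of_forall_eq hne
        fun i _ => maskedMatrix_last_context k i, sub_zero]
      simp [xhatAvg]
    · rw [Finset.sum_div_card_eq_of_forall_eq hne
        fun i _ => maskedMatrix_positional_context_eq_query hj k i, sub_self]
      simp [xhatAvg, hj]

/-- If `I(m₀)` is nonempty, then the query column of the masked matrix
minus the average of the masked context columns over `I(m₀)` equals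
`[0; −p^{MLE}_{m₀}; 0; 1_d]` with `p^{MLE}_{m₀}` the average of the `x_{m₀ i}`, `i ∈ I(m₀)`. -/
theorem masked_query_minus_average
    (M N d : ℕ) (hM : 1 ≤ M) (hN : 1 ≤ N) (hd : 1 ≤ d)
    (P : Fin M → Finset (Fin M))
    (hP : ∀ m : Fin M, ∀ m' ∈ P m, m' < m)
    (m₀ : Fin M) (x : Fin M → Fin N → Fin d → ℝ) (xq : Fin M → Fin d → ℝ)
    (hx : ∀ m i, IsOneHot (x m i))
    (hxq1 : ∀ m, m < m₀ → IsOneHot (xq m))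
    (hxq2 : ∀ m, m₀ ≤ m → xq m = 0)
    (hne : (Iset P x xq m₀).Nonempty) :
    (fun r => maskedMatrix P x xq m₀ r (Sum.inr ()) -
        (∑ i ∈ Iset P x xq m₀, maskedMatrix P x xq m₀ r (Sum.inl i)) /
          ((Iset P x xq m₀).card : ℝ)) =
      xhatAvg P x xq m₀ :=
  masked_query_minus_average_general M N d P m₀ x xq hxq2 hne

end
end
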